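/- Let (u_α)_{α>0} be a family of complex numbers with u_α → u ∈ ℂ as α → ∞. Then (1 + u_α/√α)^α · e^(-√α·u_α) converges to e^(-u²/2) as α → ∞. -/

import Mathlib

open Filter

private lemma logTaylor_three (z : ℂ) : Complex.logTaylor 3 z = z - z ^ 2 / 2 := by
  simp [Complex.logTaylor_succ, Complex.logTaylor_zero]
  ring

/-- Second order asymptotics III: if `u_α → u` then
`(1 + u_α/√α)^α e^{-√α u_α} → e^{-u²/2}` as `α → ∞`. -/
theorem second_order_asymptotics_III (u : ℝ → ℂ) (u₀ : ℂ)
    (h : Tendsto u atTop (nhds u₀)) :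
    Tendsto (fun α : ℝ =>
        (1 + u α / (Real.sqrt α : ℂ)) ^ (α : ℂ) * Complex.exp (-((Real.sqrt α : ℂ) * u α)))
      atTop (nhds (Complex.exp (-(u₀ ^ 2) / 2))) := by
  set z : ℝ → ℂ := fun α => u α / (Real.sqrt α : ℂ) with hzdef
  -- √α → ∞, so (√α)⁻¹ → 0 (as a complex number)
  have hsqrt : Tendsto Real.sqrt atTop atTop := by
    exact (tendsto_rpow_atTop (by norm_num : (0:ℝ) < 1/2)).congr
      fun x => (Real.sqrt_eq_rpow x).symm
  have hinv : Tendsto (fun α : ℝ => ((Real.sqrt α : ℂ))⁻¹) atTop (nhds 0) := by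
    have : Tendsto (fun α : ℝ => (Real.sqrt α)⁻¹) atTop (nhds 0) :=
      tendsto_inv_atTop_zero.comp hsqrt
    have := (Complex.continuous_ofReal.tendsto 0).comp this
    simpa [Function.comp_def, Complex.ofReal_inv] using this
  have hz : Tendsto z atTop (nhds 0) := by
    have := h.mul hinv
    simpa [hzdef, div_eq_mul_inv] using this
  -- key auxiliary limit
  have hg : Tendsto (fun α : ℝ => (α : ℂ) * (Complex.log (1 + z α) - z α)) atTop
      (nhds (-(u₀ ^ 2) / 2)) := by
    have hmain : Tendsto (fun α : ℝ => -(u α ^ 2) / 2) atTop (nhds (-(u₀ ^ 2) / 2)) := by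
      exact (((h.pow 2).neg).div_const 2)
    -- remainder term
    have hbound : Tendsto (fun α : ℝ => 2 / 3 * ‖u α‖ ^ 3 * (Real.sqrt α)⁻¹) atTop (nhds 0) := by
      have h1 : Tendsto (fun α : ℝ => ‖u α‖) atTop (nhds ‖u₀‖) := (h.norm)
      have h2 : Tendsto (fun α : ℝ => (Real.sqrt α)⁻¹) atTop (nhds 0) :=
        tendsto_inv_atTop_zero.comp hsqrt
      have := ((h1.pow 3).const_mul (2 / 3)).mul h2
      simpa using this
    have hr : Tendsto (fun α : ℝ =>
        (α : ℂ) * (Complex.log (1 + z α) - z α + z α ^ 2 / 2)) atTop (nhds 0) := by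
      apply squeeze_zero_norm' _ hbound
      have hev1 : ∀ᶠ α : ℝ in atTop, ‖z α‖ ≤ 1 / 2 := by
        have := hz.norm
        simp only [norm_zero] at this
        filter_upwards [this.eventually_le_const (by norm_num : (0:ℝ) < 1/2)] with α hα
        exact hα
      filter_upwards [hev1, eventually_gt_atTop (0 : ℝ)] with α hα hα0
      have hzlt : ‖z α‖ < 1 := lt_of_le_of_lt hα (by norm_num)
      have key := Complex.norm_log_sub_logTaylor_le 2 hzlt
      rw [logTaylor_three] at key
      have heq : Complex.log (1 + z α) - z α + z α ^ 2 / 2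
          = Complex.log (1 + z α) - (z α - z α ^ 2 / 2) := by ring
      rw [norm_mul, heq]
      have h3 : ‖(α : ℂ)‖ = α := by
        simp [Complex.norm_real, abs_of_pos hα0]
      rw [h3]
      have hzn : ‖z α‖ = ‖u α‖ / Real.sqrt α := by
        simp [hzdef, norm_div, Complex.norm_real, abs_of_nonneg (Real.sqrt_nonneg α)]
      have hstep : ‖Complex.log (1 + z α) - (z α - z α ^ 2 / 2)‖
          ≤ ‖z α‖ ^ 3 * 2 / 3 := by
        refine le_trans key ?_
        have h4 : (1 - ‖z α‖)⁻¹ ≤ 2 := by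
          rw [inv_le_comm₀ (by linarith) (by norm_num)]
          linarith
        have h5 : ‖z α‖ ^ (2 + 1) * (1 - ‖z α‖)⁻¹ ≤ ‖z α‖ ^ 3 * 2 := by
          exact mul_le_mul_of_nonneg_left h4 (by positivity)
        calc ‖z α‖ ^ (2 + 1) * (1 - ‖z α‖)⁻¹ / (2 + 1)
            ≤ ‖z α‖ ^ 3 * 2 / (2 + 1) := by
              apply div_le_div_of_nonneg_right h5 (by norm_num) |>.trans_eq rfl
          _ = ‖z α‖ ^ 3 * 2 / 3 := by norm_num
      calc α * ‖Complex.log (1 + z α) - (z α - z α ^ 2 / 2)‖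
          ≤ α * (‖z α‖ ^ 3 * 2 / 3) := by
            exact mul_le_mul_of_nonneg_left hstep (le_of_lt hα0)
        _ = 2 / 3 * ‖u α‖ ^ 3 * (Real.sqrt α)⁻¹ := by
            rw [hzn]
            have hs : Real.sqrt α > 0 := Real.sqrt_pos.mpr hα0
            have hs3 : Real.sqrt α ^ 3 = Real.sqrt α * α := by
              rw [pow_succ, Real.sq_sqrt (le_of_lt hα0)]
              ring
            field_simp
            rw [Real.sq_sqrt (le_of_lt hα0)]
            ring
    have heq : ∀ᶠ α : ℝ in atTop,
        -(u α ^ 2) / 2 + (α : ℂ) * (Complex.log (1 + z α) - z α + z α ^ 2 / 2)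
          = (α : ℂ) * (Complex.log (1 + z α) - z α) := by
      filter_upwards [eventually_gt_atTop (0 : ℝ)] with α hα0
      have h2 : ((Real.sqrt α : ℝ) : ℂ) ^ 2 = (α : ℂ) := by
        rw [← Complex.ofReal_pow, Real.sq_sqrt (le_of_lt hα0)]
      have hαne : (α : ℂ) ≠ 0 := by
        simpa using ne_of_gt hα0
      have hαz : (α : ℂ) * z α ^ 2 = u α ^ 2 := by
        rw [hzdef]
        simp only
        rw [div_pow, h2, mul_div_cancel₀ _ hαne]
      linear_combination (1 / 2 : ℂ) * hαz
    rw [show (-(u₀ ^ 2) / 2 : ℂ) = -(u₀ ^ 2) / 2 + 0 by ring]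
    exact Tendsto.congr' heq (hmain.add hr)
  -- the original function eventually equals exp of the auxiliary
  have heq : ∀ᶠ α : ℝ in atTop,
      (1 + u α / (Real.sqrt α : ℂ)) ^ (α : ℂ) * Complex.exp (-((Real.sqrt α : ℂ) * u α))
        = Complex.exp ((α : ℂ) * (Complex.log (1 + z α) - z α)) := by
    have hev1 : ∀ᶠ α : ℝ in atTop, ‖z α‖ < 1 := by
      have := hz.norm
      simp only [norm_zero] at this
      exact this.eventually_lt_const (by norm_num)
    filter_upwards [hev1, eventually_gt_atTop (0 : ℝ)] with α hα hα0
    have hne : (1 : ℂ) + z α ≠ 0 := by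
      intro hcon
      have : ‖z α‖ = 1 := by
        have : z α = -1 := by linear_combination hcon
        simp [this]
      linarith
    rw [Complex.cpow_def_of_ne_zero hne, ← Complex.exp_add]
    congr 1
    have hαz : (α : ℂ) * z α = (Real.sqrt α : ℂ) * u α := by
      have h2 : ((Real.sqrt α : ℝ) : ℂ) * (Real.sqrt α : ℂ) = (α : ℂ) := by
        rw [← Complex.ofReal_mul, Real.mul_self_sqrt (le_of_lt hα0)]
      have hs : (Real.sqrt α : ℂ) ≠ 0 := by
        simpa using (ne_of_gt (Real.sqrt_pos.mpr hα0))
      simp only [hzdef]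
      rw [← h2]
      field_simp
    rw [mul_sub, hαz]
    ring
  refine Tendsto.congr' (heq.mono fun α hα => hα.symm) ?_
  exact (Complex.continuous_exp.tendsto _).comp hg
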